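/- For every m ∈ ℕ₀ and every t ∈ ℝ, the integral ∫_ℝ e^{−(t−τ)²} e^{−τ²/2} H_m(τ) dτ converges and equals √(2π/3) · 3^{−m/2} · e^{−t²/3} · H_m(2t/√3). -/

import Mathlib

/-!
Completing the square, `-(t - τ)² - τ²/2 = -t²/3 - (3/2)(τ - 2t/3)²`, reduces the claim to the
Gaussian moments `J_m = ∫ exp (-c (x - b)²) H_m(x) dx` with `c = 3/2`, `b = 2t/3`. Integrating by
parts against the Gaussian and using `H'_{m+1} = 2(m+1) H_m` together with the three-term recurrence
`H_{m+2} = 2x H_{m+1} - 2(m+1) H_m` gives `J_{m+2} = 2b J_{m+1} - 2(m+1)(1 - 1/c) J_m`. When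
`r² = 1 - 1/c`, the sequence `√(π/c) r^m H_m(b/r)` satisfies the same recurrence and has the same
first two terms; here `r = 1/√3`.
-/

open Real Finset MeasureTheory

/-- The `m`-th physicists' Hermite polynomial
`H_m(x) = m! ∑_{k=0}^{⌊m/2⌋} ((−1)^k/(k!(m−2k)!)) (2x)^{m−2k}`. -/
noncomputable def hermitePoly (m : ℕ) (x : ℝ) : ℝ :=
  (Nat.factorial m : ℝ) *
    ∑ k ∈ Finset.range (m / 2 + 1),
      (-1) ^ k / ((Nat.factorial k : ℝ) * (Nat.factorial (m - 2 * k) : ℝ)) *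
        (2 * x) ^ (m - 2 * k)

open scoped Nat
open Polynomial

/-- Zero for `2 * k > m`, so that every long enough range of summands adds up to `hermitePoly m`
and no truncated subtraction `m - 2 * k` has to be tracked. -/
noncomputable def hermiteSummand (m k : ℕ) (x : ℝ) : ℝ :=
  if 2 * k ≤ m then m ! * (-1 : ℝ) ^ k / (k ! * (m - 2 * k)!) * (2 * x) ^ (m - 2 * k) else 0

lemma hermitePoly_eq_sum_hermiteSummand {m N : ℕ} (hN : m / 2 < N) (x : ℝ) :
    hermitePoly m x = ∑ k ∈ range N, hermiteSummand m k x := by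
  rw [hermitePoly, mul_sum]
  calc _ = ∑ k ∈ range (m / 2 + 1), hermiteSummand m k x := sum_congr rfl fun k hk => by
        rw [hermiteSummand, if_pos (by simp only [mem_range] at hk; omega)]
        ring
    _ = _ := sum_subset (range_subset_range.2 (by omega)) fun k _ hk => by
        simp only [mem_range] at hk
        rw [hermiteSummand, if_neg (by omega)]

lemma hermitePoly_zero (x : ℝ) : hermitePoly 0 x = 1 := by
  simp [hermitePoly]

lemma hermitePoly_one (x : ℝ) : hermitePoly 1 x = 2 * x := by
  simp [hermitePoly]

lemma hermiteSummand_zero_right (m : ℕ) (x : ℝ) : hermiteSummand m 0 x = (2 * x) ^ m := by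
  simp [hermiteSummand, Nat.factorial_ne_zero]

lemma hermiteSummand_succ_succ (m k : ℕ) (x : ℝ) :
    hermiteSummand (m + 2) (k + 1) x =
      2 * x * hermiteSummand (m + 1) (k + 1) x - 2 * (m + 1) * hermiteSummand m k x := by
  rcases lt_trichotomy m (2 * k) with h | rfl | h
  · simp [hermiteSummand, show ¬ 2 * (k + 1) ≤ m + 2 by omega, show ¬ 2 * (k + 1) ≤ m + 1 by omega,
      show ¬ 2 * k ≤ m by omega]
  · simp only [hermiteSummand, if_pos (by omega : 2 * (k + 1) ≤ 2 * k + 2),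
      if_neg (by omega : ¬ 2 * (k + 1) ≤ 2 * k + 1), if_pos le_rfl, Nat.sub_self,
      show 2 * k + 2 - 2 * (k + 1) = 0 by omega, Nat.factorial_succ]
    push_cast
    field_simp
    ring
  · obtain ⟨j, rfl⟩ : ∃ j, m = 2 * k + 1 + j := ⟨m - (2 * k + 1), by omega⟩
    simp only [hermiteSummand, if_pos (by omega : 2 * (k + 1) ≤ 2 * k + 1 + j + 2),
      if_pos (by omega : 2 * (k + 1) ≤ 2 * k + 1 + j + 1),
      if_pos (by omega : 2 * k ≤ 2 * k + 1 + j),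
      show 2 * k + 1 + j + 2 - 2 * (k + 1) = j + 1 by omega,
      show 2 * k + 1 + j + 1 - 2 * (k + 1) = j by omega,
      show 2 * k + 1 + j - 2 * k = j + 1 by omega,
      show 2 * k + 1 + j + 2 = (2 * k + 1 + j) + 1 + 1 by omega, Nat.factorial_succ]
    push_cast
    field_simp
    ring

lemma hasDerivAt_hermiteSummand (m k : ℕ) (x : ℝ) :
    HasDerivAt (hermiteSummand (m + 1) k) (2 * (m + 1) * hermiteSummand m k x) x := by
  rcases lt_or_ge m (2 * k) with h | h
  · have hconst : hermiteSummand (m + 1) k = fun _ => hermiteSummand (m + 1) k 0 := by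
      ext y
      by_cases h' : 2 * k ≤ m + 1 <;> simp [hermiteSummand, h', show m + 1 - 2 * k = 0 by omega]
    rw [hconst]
    simpa [hermiteSummand, show ¬ 2 * k ≤ m by omega] using hasDerivAt_const x _
  · obtain ⟨j, rfl⟩ : ∃ j, m = 2 * k + j := ⟨m - 2 * k, by omega⟩
    have hfun : hermiteSummand (2 * k + j + 1) k =
        fun y => (2 * k + j + 1)! * (-1 : ℝ) ^ k / (k ! * (j + 1)!) * (2 * y) ^ (j + 1) := by
      ext y
      rw [hermiteSummand, if_pos (by omega), show 2 * k + j + 1 - 2 * k = j + 1 by omega]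
    have hpow : HasDerivAt (fun y : ℝ => (2 * y) ^ (j + 1)) ((j + 1 : ℕ) * (2 * x) ^ j * 2) x := by
      simpa using ((hasDerivAt_id' x).const_mul (2 : ℝ)).fun_pow (j + 1)
    rw [hfun]
    refine (hpow.const_mul _).congr_deriv ?_
    simp only [hermiteSummand, if_pos (by omega : 2 * k ≤ 2 * k + j),
      show 2 * k + j - 2 * k = j by omega, Nat.factorial_succ]
    push_cast
    field_simp

lemma hermitePoly_succ_succ (m : ℕ) (x : ℝ) :
    hermitePoly (m + 2) x = 2 * x * hermitePoly (m + 1) x - 2 * (m + 1) * hermitePoly m x := by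
  rw [hermitePoly_eq_sum_hermiteSummand (N := m + 2) (by omega),
    hermitePoly_eq_sum_hermiteSummand (N := m + 2) (by omega),
    hermitePoly_eq_sum_hermiteSummand (N := m + 1) (by omega), sum_range_succ',
    sum_range_succ' _ (m + 1), mul_add, mul_sum, mul_sum]
  simp only [hermiteSummand_succ_succ, sum_sub_distrib, hermiteSummand_zero_right]
  ring

lemma hasDerivAt_hermitePoly (m : ℕ) (x : ℝ) :
    HasDerivAt (hermitePoly (m + 1)) (2 * (m + 1) * hermitePoly m x) x := by
  have hsum (n : ℕ) (hn : n ≤ m + 1) :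
      hermitePoly n = fun y => ∑ k ∈ range (m + 1), hermiteSummand n k y :=
    funext (hermitePoly_eq_sum_hermiteSummand (by omega))
  rw [hsum _ le_rfl, hsum _ (by omega), mul_sum]
  exact HasDerivAt.fun_sum fun k _ => hasDerivAt_hermiteSummand m k x

lemma exists_eval_eq_hermitePoly (m : ℕ) : ∃ P : ℝ[X], ∀ x, P.eval x = hermitePoly m x :=
  ⟨C (m ! : ℝ) * ∑ k ∈ range (m / 2 + 1),
      C ((-1 : ℝ) ^ k / (k ! * (m - 2 * k)!)) * (C 2 * X) ^ (m - 2 * k),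
    fun x => by simp [hermitePoly, eval_finsetSum]⟩

section Gaussian

variable {c : ℝ}

lemma integrable_exp_neg_mul_sq_mul_eval (hc : 0 < c) (P : ℝ[X]) :
    Integrable fun x : ℝ => exp (-c * x ^ 2) * P.eval x := by
  induction P using Polynomial.induction_on' with
  | add P Q hP hQ => simpa only [eval_add, mul_add] using hP.fun_add hQ
  | monomial n a =>
    have h := integrable_rpow_mul_exp_neg_mul_sq hc (s := n) (by linarith [n.cast_nonneg (α := ℝ)])
    refine (h.const_mul a).congr (ae_of_all _ fun x => ?_)
    simp only [eval_monomial, Real.rpow_natCast]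
    ring

lemma integrable_gaussian_mul_eval (hc : 0 < c) (b : ℝ) (P : ℝ[X]) :
    Integrable fun x : ℝ => exp (-c * (x - b) ^ 2) * P.eval x := by
  have h := (integrable_exp_neg_mul_sq_mul_eval hc (P.comp (X + C b))).comp_sub_right b
  simp only [eval_comp, eval_add, eval_X, eval_C, sub_add_cancel] at h
  exact h

lemma integrable_gaussian_mul_hermitePoly (hc : 0 < c) (b : ℝ) (m : ℕ) :
    Integrable fun x : ℝ => exp (-c * (x - b) ^ 2) * hermitePoly m x := by
  obtain ⟨P, hP⟩ := exists_eval_eq_hermitePoly m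
  simpa [hP] using integrable_gaussian_mul_eval hc b P

lemma integral_exp_neg_mul_sub_sq (b : ℝ) : ∫ x : ℝ, exp (-c * (x - b) ^ 2) = √(π / c) :=
  (integral_sub_right_eq_self (fun x => exp (-c * x ^ 2)) b).trans (integral_gaussian c)

lemma hasDerivAt_exp_neg_mul_sub_sq (b x : ℝ) :
    HasDerivAt (fun y => exp (-c * (y - b) ^ 2))
      (-2 * c * (x - b) * exp (-c * (x - b) ^ 2)) x := by
  have h := (((hasDerivAt_id' x).sub_const b).fun_pow 2).const_mul (-c) |>.exp
  convert h using 1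
  simp
  ring

lemma integral_sub_mul_gaussian_mul_eval (hc : 0 < c) (b : ℝ) (P : ℝ[X]) :
    2 * c * ∫ x, (x - b) * exp (-c * (x - b) ^ 2) * P.eval x =
      ∫ x, exp (-c * (x - b) ^ 2) * P.derivative.eval x := by
  have hibp := integral_mul_deriv_eq_deriv_mul_of_integrable
    (u := fun x => exp (-c * (x - b) ^ 2)) (v := fun x => P.eval x)
    (fun x _ => hasDerivAt_exp_neg_mul_sub_sq b x) (fun x _ => P.hasDerivAt x)
    (integrable_gaussian_mul_eval hc b P.derivative)
    ((integrable_gaussian_mul_eval hc b (C (-2 * c) * (X - C b) * P)).congr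
      (ae_of_all _ fun x => by simp only [Pi.mul_apply, eval_mul, eval_C, eval_sub, eval_X]; ring))
    (integrable_gaussian_mul_eval hc b P)
  rw [hibp, ← integral_const_mul, ← integral_neg]
  congr 1 with x
  ring

lemma integral_sub_mul_gaussian (hc : 0 < c) (b : ℝ) :
    ∫ x, (x - b) * exp (-c * (x - b) ^ 2) = 0 := by
  have h := integral_sub_mul_gaussian_mul_eval hc b 1
  simp only [eval_one, mul_one, derivative_one, eval_zero, mul_zero, integral_zero] at h
  exact (mul_eq_zero.mp h).resolve_left (by positivity)

lemma integral_gaussian_mul_hermitePoly_one (hc : 0 < c) (b : ℝ) :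
    ∫ x, exp (-c * (x - b) ^ 2) * hermitePoly 1 x = 2 * b * √(π / c) := by
  have hsplit (x : ℝ) : exp (-c * (x - b) ^ 2) * hermitePoly 1 x =
      2 * ((x - b) * exp (-c * (x - b) ^ 2)) + 2 * b * exp (-c * (x - b) ^ 2) := by
    rw [hermitePoly_one]
    ring
  have hint := integrable_gaussian_mul_eval hc b (X - C b)
  simp only [eval_sub, eval_X, eval_C, mul_comm (exp _)] at hint
  simp_rw [hsplit]
  rw [integral_add (hint.const_mul 2)
      (((integrable_exp_neg_mul_sq hc).comp_sub_right b).const_mul _),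
    integral_const_mul, integral_const_mul, integral_sub_mul_gaussian hc,
    integral_exp_neg_mul_sub_sq]
  ring

lemma integral_gaussian_mul_hermitePoly_succ_succ (hc : 0 < c) (b : ℝ) (m : ℕ) :
    ∫ x, exp (-c * (x - b) ^ 2) * hermitePoly (m + 2) x =
      2 * b * (∫ x, exp (-c * (x - b) ^ 2) * hermitePoly (m + 1) x) -
        2 * (m + 1) * (1 - 1 / c) * ∫ x, exp (-c * (x - b) ^ 2) * hermitePoly m x := by
  obtain ⟨P, hP⟩ := exists_eval_eq_hermitePoly (m + 1)
  have hP' (x : ℝ) : P.derivative.eval x = 2 * (m + 1) * hermitePoly m x :=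
    (P.hasDerivAt x).unique (by simpa only [hP] using hasDerivAt_hermitePoly m x)
  have hibp := integral_sub_mul_gaussian_mul_eval hc b P
  simp only [hP, hP', mul_left_comm _ (2 * ((m : ℝ) + 1)), integral_const_mul] at hibp
  have hint := integrable_gaussian_mul_eval hc b ((X - C b) * P)
  simp only [eval_mul, eval_sub, eval_X, eval_C, hP, ← mul_assoc, mul_comm _ (_ - b)] at hint
  have hsplit (x : ℝ) : exp (-c * (x - b) ^ 2) * hermitePoly (m + 2) x =
      2 * ((x - b) * exp (-c * (x - b) ^ 2) * hermitePoly (m + 1) x) +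
        2 * b * (exp (-c * (x - b) ^ 2) * hermitePoly (m + 1) x) -
        2 * (m + 1) * (exp (-c * (x - b) ^ 2) * hermitePoly m x) := by
    rw [hermitePoly_succ_succ]
    ring
  simp_rw [hsplit]
  rw [integral_sub ((hint.const_mul 2).fun_add
      ((integrable_gaussian_mul_hermitePoly hc b (m + 1)).const_mul _))
      ((integrable_gaussian_mul_hermitePoly hc b m).const_mul _),
    integral_add (hint.const_mul 2)
      ((integrable_gaussian_mul_hermitePoly hc b (m + 1)).const_mul _),
    integral_const_mul, integral_const_mul, integral_const_mul]
  have hI : ∫ x, (x - b) * exp (-c * (x - b) ^ 2) * hermitePoly (m + 1) x =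
      (m + 1) / c * ∫ x, exp (-c * (x - b) ^ 2) * hermitePoly m x := by
    rw [div_mul_eq_mul_div, eq_div_iff hc.ne']
    linarith
  rw [hI]
  ring

theorem integral_gaussian_mul_hermitePoly (hc : 0 < c) (b : ℝ) {r : ℝ} (hr0 : r ≠ 0)
    (hr : r ^ 2 = 1 - 1 / c) (m : ℕ) :
    ∫ x, exp (-c * (x - b) ^ 2) * hermitePoly m x = √(π / c) * r ^ m * hermitePoly m (b / r) := by
  induction m using Nat.twoStepInduction with
  | zero => simpa [hermitePoly_zero] using integral_exp_neg_mul_sub_sq b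
  | one =>
    rw [integral_gaussian_mul_hermitePoly_one hc, hermitePoly_one]
    field_simp
  | more m ih0 ih1 =>
    rw [integral_gaussian_mul_hermitePoly_succ_succ hc, ih0, ih1, hermitePoly_succ_succ, ← hr]
    field_simp
    ring

end Gaussian

lemma inv_sqrt_three_pow (m : ℕ) : (√3)⁻¹ ^ m = (3 : ℝ) ^ (-(m : ℝ) / 2) := by
  rw [Real.sqrt_eq_rpow, ← Real.rpow_neg (by norm_num), ← Real.rpow_natCast,
    ← Real.rpow_mul (by norm_num)]
  ring_nf

/-- Gaussian–Hermite convolution identity: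
`∫ℝ e^{−(t−τ)²} e^{−τ²/2} H_m(τ) dτ = √(2π/3) 3^{−m/2} e^{−t²/3} H_m(2t/√3)`. -/
theorem gaussian_hermite_integral (m : ℕ) (t : ℝ) :
    Integrable
        (fun τ : ℝ => Real.exp (-(t - τ) ^ 2) * Real.exp (-τ ^ 2 / 2) * hermitePoly m τ) ∧
      ∫ τ : ℝ, Real.exp (-(t - τ) ^ 2) * Real.exp (-τ ^ 2 / 2) * hermitePoly m τ =
        Real.sqrt (2 * Real.pi / 3) * (3 : ℝ) ^ (-(m : ℝ) / 2) * Real.exp (-t ^ 2 / 3) *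
          hermitePoly m (2 * t / Real.sqrt 3) := by
  have hsquare (τ : ℝ) : exp (-(t - τ) ^ 2) * exp (-τ ^ 2 / 2) =
      exp (-t ^ 2 / 3) * exp (-(3 / 2) * (τ - 2 * t / 3) ^ 2) := by
    rw [← exp_add, ← exp_add]
    ring_nf
  have hr : (√3)⁻¹ ^ 2 = 1 - 1 / (3 / 2 : ℝ) := by
    rw [inv_pow, sq_sqrt (by norm_num)]
    norm_num
  simp_rw [hsquare, mul_assoc]
  refine ⟨(integrable_gaussian_mul_hermitePoly (by norm_num) _ m).const_mul _, ?_⟩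
  rw [integral_const_mul, integral_gaussian_mul_hermitePoly (by norm_num) _ (by positivity) hr,
    inv_sqrt_three_pow, show π / (3 / 2) = 2 * π / 3 by ring,
    show 2 * t / 3 / (√3)⁻¹ = 2 * t / √3 by field_simp; rw [sq_sqrt (by norm_num)]]
  ring
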